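/- Fix T > 0 and let λ denote Lebesgue measure on [0,T]. Assume that for every ε > 0 there is a continuous solution X^ε of the ε-approximating equation on [0,T]. Then lim_{ε→0} λ({t ∈ [0,T] : X^ε_t ≤ 0}) = 0. -/

import Mathlib

/-!
Fix `0 < ε ≤ 1`. First, a solution is bounded above uniformly in `ε`: let `τ` be the last time
before `t` with `X τ ≤ c := max (X 0) 1`. On `(τ, t]` the drift integrand is at most
`(s + ε)^(2H-1)`, whose integral is bounded independently of `ε`, the term `-b ∫ X` is
nonpositive and the noise increment is bounded by `2 sup |σ g|`. Second, on `{X ≤ 0}` the drift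
integrand equals `(s + ε)^(2H-1) / ε ≥ (T + 1)^(2H-1) / ε`, while the equation at time `T`
together with the upper bound bounds `a ∫₀ᵀ` of the drift independently of `ε`. Hence
`λ {X ≤ 0} = O(ε)`.
-/

open MeasureTheory Filter Set

/-- `X` is a continuous solution on `[0,T]` of the ε-approximating equation
`X_t = X₀ + a ∫₀ᵗ (s+ε)^{2H-1} / (X_s 1_{X_s>0} + ε) ds − b ∫₀ᵗ X_s ds + σ g(t)`. -/
def approxSol (X₀ a b σ H : ℝ) (g : ℝ → ℝ) (T ε : ℝ) (X : ℝ → ℝ) : Prop :=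
  ContinuousOn X (Set.Icc 0 T) ∧
    ∀ t ∈ Set.Icc (0:ℝ) T,
      X t = X₀ + a * (∫ s in (0:ℝ)..t,
            (s + ε) ^ (2 * H - 1) / ((if 0 < X s then X s else 0) + ε))
          - b * (∫ s in (0:ℝ)..t, X s) + σ * g t


open Topology

lemma ContinuousOn.exists_last_le {α β : Type*} [ConditionallyCompleteLinearOrder α]
    [TopologicalSpace α] [OrderTopology α] [LinearOrder β] [TopologicalSpace β]
    [OrderClosedTopology β] {f : α → β} {a b : α} {c : β} (hf : ContinuousOn f (Icc a b))
    (hab : a ≤ b) (ha : f a ≤ c) :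
    ∃ τ ∈ Icc a b, f τ ≤ c ∧ ∀ s ∈ Ioc τ b, c < f s := by
  have hS : IsCompact (Icc a b ∩ f ⁻¹' Iic c) := isCompact_Icc.of_isClosed_subset
    (hf.preimage_isClosed_of_isClosed isClosed_Icc isClosed_Iic) inter_subset_left
  obtain ⟨τ, ⟨hτ, hfτ⟩, hmax⟩ := hS.exists_isGreatest ⟨a, ⟨left_mem_Icc.2 hab, ha⟩⟩
  refine ⟨τ, hτ, hfτ, fun s hs => lt_of_not_ge fun hfs => ?_⟩
  exact (hmax ⟨⟨hτ.1.trans hs.1.le, hs.2⟩, hfs⟩).not_gt hs.1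

lemma mul_measureReal_le_intervalIntegral {f : ℝ → ℝ} {A : Set ℝ} {a b c : ℝ} (hab : a ≤ b)
    (hf : ContinuousOn f (Icc a b)) (hf0 : ∀ x ∈ Icc a b, 0 ≤ f x) (hA : MeasurableSet A)
    (hAab : A ⊆ Icc a b) (hc : ∀ x ∈ A, c ≤ f x) :
    c * volume.real A ≤ ∫ x in a..b, f x := by
  have hfi : IntegrableOn f (Icc a b) := hf.integrableOn_Icc
  calc c * volume.real A ≤ ∫ x in A, f x :=
        setIntegral_ge_of_const_le_real hA
          (measure_ne_top_of_subset hAab measure_Icc_lt_top.ne) hc (hfi.mono_set hAab)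
    _ ≤ ∫ x in Icc a b, f x :=
        setIntegral_mono_set hfi ((ae_restrict_iff' measurableSet_Icc).2 (.of_forall hf0))
          (.of_forall hAab)
    _ = ∫ x in a..b, f x := by
        rw [intervalIntegral.integral_of_le hab, integral_Icc_eq_integral_Ioc]

lemma integral_add_rpow_sub_one_le {p ε τ t T : ℝ} (hp : 0 < p) (hε : 0 < ε) (hε1 : ε ≤ 1)
    (hτ : 0 ≤ τ) (hτt : τ ≤ t) (htT : t ≤ T) :
    ∫ s in τ..t, (s + ε) ^ (p - 1) ≤ (T + 1) ^ p / p := by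
  rw [intervalIntegral.integral_comp_add_right (· ^ (p - 1)),
    integral_rpow (Or.inl (by linarith)), sub_add_cancel]
  gcongr
  calc (t + ε) ^ p - (τ + ε) ^ p ≤ (t + ε) ^ p := by
        linarith [Real.rpow_nonneg (by linarith : 0 ≤ τ + ε) p]
    _ ≤ (T + 1) ^ p := by gcongr; linarith

lemma continuousOn_add_rpow {ε r : ℝ} (hε : 0 < ε) :
    ContinuousOn (fun s : ℝ => (s + ε) ^ r) (Ici 0) :=
  (continuousOn_id.add continuousOn_const).rpow_const
    fun s hs => Or.inl (by linarith [mem_Ici.1 hs] : s + ε ≠ 0)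

noncomputable def approxDrift (H ε : ℝ) (X : ℝ → ℝ) (s : ℝ) : ℝ :=
  (s + ε) ^ (2 * H - 1) / ((if 0 < X s then X s else 0) + ε)

section approxDrift

variable {H ε s : ℝ} {X : ℝ → ℝ}

lemma approxDrift_nonneg (hε : 0 < ε) (hs : 0 ≤ s) : 0 ≤ approxDrift H ε X s := by
  unfold approxDrift
  have := Real.rpow_nonneg (by linarith : 0 ≤ s + ε) (2 * H - 1)
  split_ifs with hX <;> positivity

lemma approxDrift_le (hε : 0 < ε) (hs : 0 ≤ s) (hX : 1 ≤ X s) :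
    approxDrift H ε X s ≤ (s + ε) ^ (2 * H - 1) := by
  unfold approxDrift
  rw [if_pos (by linarith)]
  exact div_le_self (Real.rpow_nonneg (by linarith) _) (by linarith)

lemma approxDrift_of_nonpos (hX : X s ≤ 0) : approxDrift H ε X s = (s + ε) ^ (2 * H - 1) / ε := by
  simp [approxDrift, hX.not_gt]

lemma continuousOn_approxDrift {T : ℝ} (hε : 0 < ε) (hX : ContinuousOn X (Icc 0 T)) :
    ContinuousOn (approxDrift H ε X) (Icc 0 T) := by
  have hpos : ContinuousOn (fun s => if 0 < X s then X s else 0) (Icc 0 T) := by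
    refine (hX.sup (continuousOn_const (c := 0))).congr fun s _ => ?_
    split_ifs with h
    · exact (sup_eq_left.2 h.le).symm
    · exact (sup_eq_right.2 (not_lt.1 h)).symm
  refine ((continuousOn_add_rpow hε).mono Icc_subset_Ici_self).div
    (hpos.add continuousOn_const) fun s _ => ?_
  split_ifs <;> linarith

end approxDrift

namespace approxSol

variable {X₀ a b σ H T ε G : ℝ} {g X : ℝ → ℝ}

lemma apply_zero (hX : approxSol X₀ a b σ H g T ε X) (hT : 0 ≤ T) : X 0 = X₀ + σ * g 0 := by
  simpa using hX.2 0 ⟨le_rfl, hT⟩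

lemma sub_eq (hX : approxSol X₀ a b σ H g T ε X) (hε : 0 < ε) {τ t : ℝ} (hτ : τ ∈ Icc 0 T)
    (ht : t ∈ Icc 0 T) :
    X t - X τ = a * (∫ s in τ..t, approxDrift H ε X s) - b * (∫ s in τ..t, X s)
      + (σ * g t - σ * g τ) := by
  have h0 : (0 : ℝ) ∈ Icc 0 T := ⟨le_rfl, hτ.1.trans hτ.2⟩
  have hint {f : ℝ → ℝ} (hf : ContinuousOn f (Icc 0 T)) {u : ℝ} (hu : u ∈ Icc 0 T) :
      IntervalIntegrable f volume 0 u :=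
    (hf.mono (uIcc_subset_Icc h0 hu)).intervalIntegrable
  have hf := continuousOn_approxDrift (H := H) hε hX.1
  have hdrift := intervalIntegral.integral_interval_sub_left (hint hf ht) (hint hf hτ)
  have hXint := intervalIntegral.integral_interval_sub_left (hint hX.1 ht) (hint hX.1 hτ)
  rw [hX.2 t ht, hX.2 τ hτ]
  unfold approxDrift at hdrift ⊢
  linear_combination a * hdrift - b * hXint

lemma sub_le (hX : approxSol X₀ a b σ H g T ε X) (ha : 0 ≤ a) (hb : 0 ≤ b) (hH : 0 < H)
    (hε : 0 < ε) (hε1 : ε ≤ 1) (hW : ∀ t ∈ Icc 0 T, |σ * g t| ≤ G) {τ t : ℝ}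
    (hτ : τ ∈ Icc 0 T) (ht : t ∈ Icc 0 T) (hτt : τ ≤ t) (h1 : ∀ s ∈ Ioc τ t, 1 ≤ X s) :
    X t - X τ ≤ a * ((T + 1) ^ (2 * H) / (2 * H)) + 2 * G := by
  have hsub : uIcc τ t ⊆ Icc 0 T := uIcc_subset_Icc hτ ht
  have hdrift : ∫ s in τ..t, approxDrift H ε X s ≤ (T + 1) ^ (2 * H) / (2 * H) :=
    (intervalIntegral.integral_mono_on_of_le_Ioo hτt
      ((continuousOn_approxDrift hε hX.1).mono hsub).intervalIntegrable
      ((continuousOn_add_rpow hε).mono (hsub.trans Icc_subset_Ici_self)).intervalIntegrable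
      fun s hs => approxDrift_le hε (hτ.1.trans hs.1.le) (h1 s (Ioo_subset_Ioc_self hs))).trans
    (integral_add_rpow_sub_one_le (by linarith) hε hε1 hτ.1 hτt ht.2)
  have hXint : 0 ≤ ∫ s in τ..t, X s := by
    simpa using intervalIntegral.integral_mono_on_of_le_Ioo hτt intervalIntegrable_const
      (hX.1.mono hsub).intervalIntegrable
      fun s hs => zero_le_one.trans (h1 s (Ioo_subset_Ioc_self hs))
  have hnoise := (abs_sub_le_iff.1 ((abs_sub _ _).trans (add_le_add (hW t ht) (hW τ hτ)))).1
  rw [hX.sub_eq hε hτ ht]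
  have := mul_nonneg hb hXint
  have := mul_le_mul_of_nonneg_left hdrift ha
  linarith

lemma apply_le (hX : approxSol X₀ a b σ H g T ε X) (ha : 0 ≤ a) (hb : 0 ≤ b) (hH : 0 < H)
    (hε : 0 < ε) (hε1 : ε ≤ 1) (hW : ∀ t ∈ Icc 0 T, |σ * g t| ≤ G) {c : ℝ} (hc : 1 ≤ c)
    (h0 : X 0 ≤ c) {t : ℝ} (ht : t ∈ Icc 0 T) :
    X t ≤ c + (a * ((T + 1) ^ (2 * H) / (2 * H)) + 2 * G) := by
  obtain ⟨τ, hτ, hXτ, hgt⟩ := (hX.1.mono (Icc_subset_Icc_right ht.2)).exists_last_le ht.1 h0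
  have := hX.sub_le ha hb hH hε hε1 hW ⟨hτ.1, hτ.2.trans ht.2⟩ ht hτ.2
    fun s hs => hc.trans (hgt s hs).le
  linarith

lemma volume_nonpos_le (hX : approxSol X₀ a b σ H g T ε X) (ha : 0 < a) (hb : 0 ≤ b)
    (hH : H ≤ 1 / 2) (hε : 0 < ε) (hε1 : ε ≤ 1) (hT : 0 ≤ T) (hW : ∀ t ∈ Icc 0 T, |σ * g t| ≤ G)
    {M : ℝ} (hM : ∀ t ∈ Icc 0 T, X t ≤ M) :
    volume {t ∈ Icc 0 T | X t ≤ 0} ≤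
      ENNReal.ofReal ((M - X 0 + b * (M * T) + 2 * G) / (a * (T + 1) ^ (2 * H - 1)) * ε) := by
  set A := {t ∈ Icc 0 T | X t ≤ 0}
  set k := (T + 1) ^ (2 * H - 1)
  have hk : 0 < k := Real.rpow_pos_of_pos (by linarith) _
  have hT0 : (0 : ℝ) ∈ Icc 0 T := ⟨le_rfl, hT⟩
  have hTT : T ∈ Icc 0 T := ⟨hT, le_rfl⟩
  have hA : MeasurableSet A :=
    (hX.1.preimage_isClosed_of_isClosed isClosed_Icc isClosed_Iic).measurableSet
  have hlower : k / ε * volume.real A ≤ ∫ s in 0..T, approxDrift H ε X s := by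
    refine mul_measureReal_le_intervalIntegral hT (continuousOn_approxDrift hε hX.1)
      (fun s hs => approxDrift_nonneg hε hs.1) hA (fun _ hs => hs.1) fun s hs => ?_
    rw [approxDrift_of_nonpos hs.2]
    gcongr
    exact Real.rpow_le_rpow_of_nonpos (by linarith [hs.1.1]) (by linarith [hs.1.2]) (by linarith)
  have hupper : a * (∫ s in 0..T, approxDrift H ε X s) ≤ M - X 0 + b * (M * T) + 2 * G := by
    have hint : ∫ s in 0..T, X s ≤ M * T := by
      simpa [mul_comm] using intervalIntegral.integral_mono_on hT
        (hX.1.intervalIntegrable_of_Icc (μ := volume) hT) intervalIntegrable_const hM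
    have hnoise := (abs_sub_le_iff.1 ((abs_sub _ _).trans (add_le_add (hW T hTT) (hW 0 hT0)))).2
    have := hX.sub_eq hε hT0 hTT
    have := mul_le_mul_of_nonneg_left hint hb
    linarith [hM T hTT]
  have hreal : volume.real A * (a * k) ≤ (M - X 0 + b * (M * T) + 2 * G) * ε := by
    calc volume.real A * (a * k) = a * (k / ε * volume.real A) * ε := by field_simp
      _ ≤ (M - X 0 + b * (M * T) + 2 * G) * ε := by gcongr; exact hupper.trans' (by gcongr)
  rw [← ofReal_measureReal (measure_ne_top_of_subset (fun _ hs => hs.1) measure_Icc_lt_top.ne)]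
  gcongr
  rwa [div_mul_eq_mul_div, le_div_iff₀ (by positivity)]

end approxSol

theorem measure_nonpositive_tendsto_zero_general
    (X₀ a b σ H : ℝ) (ha : 0 < a) (hb : 0 ≤ b)
    (hH0 : 0 < H) (hH : H < 1/2)
    (g : ℝ → ℝ) (hgc : ContinuousOn g (Set.Ici 0))
    (T : ℝ) (hT : 0 < T)
    (Xe : ℝ → ℝ → ℝ)
    (hXe : ∀ ε > (0:ℝ), approxSol X₀ a b σ H g T ε (Xe ε)) :
    Tendsto (fun ε => volume {t ∈ Set.Icc (0:ℝ) T | Xe ε t ≤ 0})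
      (nhdsWithin 0 (Set.Ioi 0)) (nhds 0) := by
  obtain ⟨G, hG⟩ := isCompact_Icc.exists_bound_of_continuousOn
    ((continuousOn_const.mul hgc).mono (Icc_subset_Ici_self : Icc 0 T ⊆ Ici 0))
  have hW : ∀ t ∈ Icc 0 T, |σ * g t| ≤ G := fun t ht => hG t ht
  set x₀ := X₀ + σ * g 0
  set M := max x₀ 1 + (a * ((T + 1) ^ (2 * H) / (2 * H)) + 2 * G)
  set C := (M - x₀ + b * (M * T) + 2 * G) / (a * (T + 1) ^ (2 * H - 1))
  have hbound : ∀ ε ∈ Ioo (0 : ℝ) 1,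
      volume {t ∈ Icc 0 T | Xe ε t ≤ 0} ≤ ENNReal.ofReal (C * ε) := by
    intro ε hε
    have hX := hXe ε hε.1
    have h0 : Xe ε 0 = x₀ := hX.apply_zero hT.le
    have hM : ∀ t ∈ Icc 0 T, Xe ε t ≤ M := fun t ht => hX.apply_le ha.le hb hH0 hε.1 hε.2.le
      hW (le_max_right _ _) (h0.trans_le (le_max_left _ _)) ht
    simpa only [h0] using hX.volume_nonpos_le ha hb hH.le hε.1 hε.2.le hT.le hW hM
  have hC : Tendsto (fun ε => ENNReal.ofReal (C * ε)) (𝓝[>] 0) (𝓝 0) := by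
    simpa using ENNReal.tendsto_ofReal
      (((continuous_const_mul C).tendsto' 0 0 (mul_zero C)).mono_left nhdsWithin_le_nhds)
  refine tendsto_of_tendsto_of_tendsto_of_le_of_le' tendsto_const_nhds hC
    (.of_forall fun _ => zero_le) ?_
  filter_upwards [Ioo_mem_nhdsGT one_pos] with ε hε
  exact hbound ε hε

/-- **Proposition 3.1.** The Lebesgue measure of `{t ∈ [0,T] : X^ε_t ≤ 0}`
tends to `0` as `ε → 0`. -/
theorem measure_nonpositive_tendsto_zero
    (X₀ a b σ H : ℝ) (hX₀ : 0 < X₀) (ha : 0 < a) (hb : 0 ≤ b) (hσ : 0 < σ)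
    (hH0 : 0 < H) (hH : H < 1/2)
    (g : ℝ → ℝ) (hgc : ContinuousOn g (Set.Ici 0)) (hg0 : g 0 = 0)
    (T : ℝ) (hT : 0 < T)
    (Xe : ℝ → ℝ → ℝ)
    (hXe : ∀ ε > (0:ℝ), approxSol X₀ a b σ H g T ε (Xe ε)) :
    Tendsto (fun ε => volume {t ∈ Set.Icc (0:ℝ) T | Xe ε t ≤ 0})
      (nhdsWithin 0 (Set.Ioi 0)) (nhds 0) :=
  measure_nonpositive_tendsto_zero_general X₀ a b σ H ha hb hH0 hH g hgc T hT Xe hXe
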